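/- arXiv:2503.10955 — 2 statements merged into one kernel-verified Lean document; each statement's English description precedes it below -/
import Mathlib

section
/- For every cool stateful SOS specification L, the trace, cost, and termination semantics of L and of its reader–writer extension L² coincide: for every closed Θ-term p and every state s, trc_L(p)(s) = trc^r_{L²}(p)(s), cst_L(p)(s) = cst^r_{L²}(p)(s), and ter_L(p)(s) = ter^r_{L²}(p)(s). -/
/-! # Statement 13: the trace, cost, and termination semantics of a cool stateful SOS specification L and of its reader–writer extension L² coincide -/
namespace RW

/-- A deterministic reader–writer transition system over a state set `S`:
`rstep p s = c` means `p,s → c`; `wstep c = .inl (d,s)` means `c →ˢ d`;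
`wstep c = .inr (.inl d)` means `c → d`; `wstep c = .inr (.inr s)` means `c ↓ s`. -/
structure DRW (S : Type) where
  Rd : Type
  Wr : Type
  rstep : Rd → S → Wr
  wstep : Wr → (Wr × S) ⊕ (Wr ⊕ S)

variable {S : Type}

/-- The output transition `c →ˢ d`. -/
def OutTr (M : DRW S) (c : M.Wr) (s : S) (d : M.Wr) : Prop := M.wstep c = .inl (d, s)

/-- The silent transition `c → d`. -/
def TauTr (M : DRW S) (c d : M.Wr) : Prop := M.wstep c = .inr (.inl d)

/-- The termination transition `c ↓ s`. -/
def DownTr (M : DRW S) (c : M.Wr) (s : S) : Prop := M.wstep c = .inr (.inr s)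

/-- The weak silent transition `c ⇒ d`: a finite chain of silent steps. -/
def WSil (M : DRW S) : M.Wr → M.Wr → Prop := Relation.ReflTransGen (TauTr M)

/-- The weak output transition `c ⇒ˢ d`: `c ⇒ c' →ˢ d` for some `c'`. -/
def WOut (M : DRW S) (c : M.Wr) (s : S) (d : M.Wr) : Prop :=
  ∃ c', WSil M c c' ∧ OutTr M c' s d

/-- The weak termination transition `c ⇓ s`: `c ⇒ c' ↓ s` for some `c'`. -/
def WDone (M : DRW S) (c : M.Wr) (s : S) : Prop :=
  ∃ c', WSil M c c' ∧ DownTr M c' s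

/-- `ReachL M c l d`: from `c` there is a chain of weak output transitions
producing the list `l` of states and ending in `d`. -/
def ReachL (M : DRW S) : M.Wr → List S → M.Wr → Prop
  | c, [], d => c = d
  | c, s :: l, d => ∃ c', WOut M c s c' ∧ ReachL M c' l d

/-- `TrcEntry M c n v` holds iff the `n`-th entry (0-indexed) of the trace
`trc^w(c)` is `v`, where `v = .inl s` tags an intermediate output state and
`v = .inr s` tags the final state of a finite trace. -/
def TrcEntry (M : DRW S) (c : M.Wr) (n : ℕ) (v : S ⊕ S) : Prop :=
  (∃ l d s d', ReachL M c l d ∧ l.length = n ∧ WOut M d s d' ∧ v = .inl s) ∨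
  (∃ l d s, ReachL M c l d ∧ l.length = n ∧ WDone M d s ∧ v = .inr s)

open Classical in
/-- The writer trace map `trc^w : X_w → 𝒮^∞`, with a (nonempty, finite or infinite)
trace encoded as a function `ℕ → Option (S ⊕ S)`: a finite trace `(s₁,…,sₙ,s)`
sends `0,…,n-1` to `some (.inl sᵢ₊₁)`, `n` to `some (.inr s)` and all larger
numbers to `none`; an infinite trace `(s₁,s₂,…)` sends each `n` to
`some (.inl sₙ₊₁)`. -/
noncomputable def trcW (M : DRW S) (c : M.Wr) : ℕ → Option (S ⊕ S) := fun n =>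
  if h : ∃ v, TrcEntry M c n v then some h.choose else none

/-- The reader trace map `trc^r : X_r → (𝒮^∞)^𝒮`: `trc^r(p)(s) = trc^w(c)` where
`p,s → c`. -/
noncomputable def trcR (M : DRW S) (p : M.Rd) (s : S) : ℕ → Option (S ⊕ S) :=
  trcW M (M.rstep p s)

open Classical in
/-- The writer cost map: `cstW M c = some (n,s)` iff `trc^w(c) = (s₁,…,sₙ,s)` is
finite, and `none` (i.e. `*`) iff `trc^w(c)` is infinite. -/
noncomputable def cstW (M : DRW S) (c : M.Wr) : Option (ℕ × S) :=
  if h : ∃ ns : ℕ × S, trcW M c ns.1 = some (.inr ns.2) then some h.choose else none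

/-- The reader cost map. -/
noncomputable def cstR (M : DRW S) (p : M.Rd) (s : S) : Option (ℕ × S) :=
  cstW M (M.rstep p s)

/-- The writer termination map: the last element of a finite trace, `none` (`*`)
for an infinite trace. -/
noncomputable def terW (M : DRW S) (c : M.Wr) : Option S := (cstW M c).map Prod.snd

/-- The reader termination map. -/
noncomputable def terR (M : DRW S) (p : M.Rd) (s : S) : Option S :=
  (cstR M p s).map Prod.snd

end RW
namespace SOS

/-- Terms over a single-sorted algebraic signature with operation symbols `O` of
arities `ar`, with variables from `V`. -/
inductive OTm (O : Type) (ar : O → ℕ) (V : Type) : Type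
  | var : V → OTm O ar V
  | op : (f : O) → (Fin (ar f) → OTm O ar V) → OTm O ar V

/-- Closed terms over the signature. -/
abbrev Tm (O : Type) (ar : O → ℕ) : Type := OTm O ar Empty

variable {O : Type} {ar : O → ℕ} {S : Type}

/-- Substitution of terms for variables. -/
def OTm.subst {V V' : Type} : OTm O ar V → (V → OTm O ar V') → OTm O ar V'
  | .var v, σ => σ v
  | .op f as, σ => .op f (fun i => (as i).subst σ)

/-- A cool stateful SOS specification over the signature `(O, ar)` and the state
set `S`, presented by its defining data.  For each operator `f`, either

* `f` is passive, given by the map `o : S → (t,s') ⊕ s'` assigning to the current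
  state `s` the conclusion of the (unique, premise-free) rule for `f` at `s`:
  either a transition `f(x₁,…,xₙ),s → t,s'` with `t` a term over the variables
  `x₁,…,xₙ`, or a termination `f(x₁,…,xₙ),s ↓ s'`; or
* `f` is active with receiving position `j`, and its rules are the patience rules
  `x_j,s → y_j,s'  ⊢  f(x₁,…,x_j,…,xₙ),s → f(x₁,…,y_j,…,xₙ),s'` together with the
  rules `x_j,s ↓ s'  ⊢  f(x₁,…,xₙ),s → t,s''` resp. `f(x₁,…,xₙ),s ↓ s''` whose
  conclusion `o s' = (t,s'') ⊕ s''` depends only on `s'` (not on `s`), where `t`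
  is a term over the variables `x₁,…,xₙ` other than `x_j`. -/
structure CoolSpec (O : Type) (ar : O → ℕ) (S : Type) where
  mode : (f : O) →
    (S → (OTm O ar (Fin (ar f)) × S) ⊕ S) ⊕
    (Σ j : Fin (ar f), S → (OTm O ar {i : Fin (ar f) // i ≠ j} × S) ⊕ S)

/-- Update of an argument tuple at position `j`. -/
def updFn {f : O} (as : Fin (ar f) → Tm O ar) (j : Fin (ar f)) (p : Tm O ar) :
    Fin (ar f) → Tm O ar :=
  fun i => if i = j then p else as i

/-- The operational model `γ^L` of the stateful SOS specification determined by a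
cool specification: `stepL C p s = .inl (p',s')` means `p,s → p',s'`, and
`stepL C p s = .inr s'` means `p,s ↓ s'`. -/
def stepL (C : CoolSpec O ar S) : Tm O ar → S → (Tm O ar × S) ⊕ S
  | .var v, _ => nomatch v
  | .op f as, s =>
    match C.mode f with
    | .inl o =>
        match o s with
        | .inl (t, s') => .inl (t.subst (fun i => as i), s')
        | .inr s' => .inr s'
    | .inr ⟨j, o⟩ =>
        match stepL C (as j) s with
        | .inl (p', s') => .inl (.op f (updFn as j p'), s')
        | .inr s' =>
            match o s' with
            | .inl (t, s'') => .inl (t.subst (fun i => as i.1), s'')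
            | .inr s'' => .inr s''

/-- Writers of the reader–writer extension `L²` of a cool specification `C`.
Readers are the closed `Θ`-terms. -/
inductive WTm (C : CoolSpec O ar S) : Type
  /-- The writer `[p]_s`. -/
  | run : Tm O ar → S → WTm C
  /-- The writer `ret_s`. -/
  | ret : S → WTm C
  /-- The writer `s.c`. -/
  | out : S → WTm C → WTm C
  /-- The writer `f̄(p₁,…,c,…,pₙ)` for an active operator `f` with receiving
  position `j` (with the writer argument in position `j`). -/
  | act : (f : O) → (j : Fin (ar f)) →
      (o : S → (OTm O ar {i : Fin (ar f) // i ≠ j} × S) ⊕ S) →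
      C.mode f = .inr ⟨j, o⟩ →
      ({i : Fin (ar f) // i ≠ j} → Tm O ar) → WTm C → WTm C

/-- The reader semantics of `L²`: `rstep2 C p s` is the unique writer `c` with
`p,s → c`. -/
def rstep2 (C : CoolSpec O ar S) (t : Tm O ar) (s : S) : WTm C :=
  match t with
  | .var v => nomatch v
  | .op f as =>
    match h : C.mode f with
    | .inl o =>
        match o s with
        | .inl (t', s') => .out s' (.run (t'.subst (fun i => as i)) s')
        | .inr s' => .ret s'
    | .inr ⟨j, o⟩ => .act f j o h (fun i => as i.1) (.run (as j) s)

/-- The writer semantics of `L²`: `wstep2 C c = .inl (d,s)` means `c →ˢ d`,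
`wstep2 C c = .inr (.inl d)` means `c → d`, and `wstep2 C c = .inr (.inr s)` means
`c ↓ s`. -/
def wstep2 (C : CoolSpec O ar S) : WTm C → (WTm C × S) ⊕ (WTm C ⊕ S)
  | .run p s => .inr (.inl (rstep2 C p s))
  | .ret s => .inr (.inr s)
  | .out s c => .inl (c, s)
  | .act f j o h ps c =>
      match wstep2 C c with
      | .inl (d, s) => .inl (.act f j o h ps d, s)
      | .inr (.inl d) => .inr (.inl (.act f j o h ps d))
      | .inr (.inr s') =>
          match o s' with
          | .inl (t, s'') => .inl (.run (t.subst (fun i => ps i)) s'', s'')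
          | .inr s'' => .inr (.inr s'')

/-- The operational model `γ^{L²}` of the reader–writer extension `L²` as a
deterministic reader–writer transition system. -/
def L2Model (C : CoolSpec O ar S) : RW.DRW S where
  Rd := Tm O ar
  Wr := WTm C
  rstep := rstep2 C
  wstep := wstep2 C

end SOS
namespace SOS

variable {O : Type} {ar : O → ℕ} {S : Type}

/-- Iterated execution of the operational model `γ^L`. -/
def runL (C : CoolSpec O ar S) : (Tm O ar × S) ⊕ S → ℕ → Option ((Tm O ar × S) ⊕ S)
  | c, 0 => some c
  | c, n+1 =>
      match runL C c n with
      | some (.inl (p, s)) => some (stepL C p s)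
      | _ => none

/-- The trace map of `γ^L`, encoding the (nonempty, finite or infinite) trace
`trc_L(p)(s)` as a function `ℕ → Option (S ⊕ S)`: the `n`-th entry is
`some (.inl sₙ₊₁)` for an intermediate state produced by `→`, `some (.inr s')` for
the final state produced by `↓`, and `none` beyond the end of a finite trace. -/
def trcL (C : CoolSpec O ar S) (p : Tm O ar) (s : S) : ℕ → Option (S ⊕ S) := fun n =>
  match runL C (.inl (p, s)) (n+1) with
  | some (.inl (_, s')) => some (.inl s')
  | some (.inr s') => some (.inr s')
  | none => none

open Classical in
/-- The cost map of `γ^L`: `cstL C p s = some (n,s')` iff `trc_L(p)(s) = (s₁,…,sₙ,s')`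
is finite, and `none` (i.e. `*`) iff it is infinite. -/
noncomputable def cstL (C : CoolSpec O ar S) (p : Tm O ar) (s : S) : Option (ℕ × S) :=
  if h : ∃ ns : ℕ × S, trcL C p s ns.1 = some (.inr ns.2) then some h.choose else none

/-- The termination map of `γ^L`: the last element of a finite trace, `none` (`*`)
for an infinite trace. -/
noncomputable def terL (C : CoolSpec O ar S) (p : Tm O ar) (s : S) : Option S :=
  (cstL C p s).map Prod.snd

end SOS

/-! One step `p,s → p',s'` of `γ^L` is simulated in `γ^{L²}` by `[p]_s ⇒^{s'} d` with `[p']_{s'} ⇒ d`,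
and `p,s ↓ s'` by `[p]_s ⇓ s'`; this is proved by induction on `p`, where for an active operator
`f̄(…,[p_j]_s,…)` follows its receiving argument (the patience rules) until that argument
terminates and the rule of `L` fires. As `γ^{L²}` is deterministic, weak transitions are invariant
along silent steps, so the trace of `[p']_{s'}` is that of `d`, and induction on `n` matches the
`n`-th entries of both traces. Cost and termination are read off the trace in the same way on both
sides. -/

namespace RW

variable {S : Type} {M : DRW S}

theorem tauTr_unique {c d d' : M.Wr} (h : TauTr M c d) (h' : TauTr M c d') : d = d' := by
  unfold TauTr at h h'
  simpa [h] using h'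

theorem WSil.eq_of_not_tauTr {c a b : M.Wr} (ha : WSil M c a) (hb : WSil M c b)
    (na : ∀ e, ¬TauTr M a e) (nb : ∀ e, ¬TauTr M b e) : a = b := by
  induction ha using Relation.ReflTransGen.head_induction_on with
  | refl =>
    rcases hb.cases_head with rfl | ⟨e, he, _⟩
    · rfl
    · exact absurd he (na e)
  | head hstep _ ih =>
    rcases hb.cases_head with rfl | ⟨e, he, hb'⟩
    · exact absurd hstep (nb _)
    · cases tauTr_unique hstep he
      exact ih hb'

theorem exists_wsil_iff_of_wsil {P : M.Wr → Prop} (hP : ∀ a, P a → ∀ e, ¬TauTr M a e)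
    {c c' : M.Wr} (h : WSil M c c') :
    (∃ a, WSil M c a ∧ P a) ↔ (∃ a, WSil M c' a ∧ P a) := by
  induction h with
  | refl => rfl
  | tail _ hstep ih =>
    rw [ih]
    refine ⟨fun ⟨a, ha, hPa⟩ => ?_, fun ⟨a, ha, hPa⟩ => ⟨a, ha.head hstep, hPa⟩⟩
    rcases ha.cases_head with rfl | ⟨e, he, ha'⟩
    · exact absurd hstep (hP _ hPa _)
    · cases tauTr_unique hstep he
      exact ⟨a, ha', hPa⟩

theorem not_tauTr_of_outTr {a d : M.Wr} {s : S} (h : OutTr M a s d) (e : M.Wr) :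
    ¬TauTr M a e := by
  unfold OutTr at h; unfold TauTr; simp [h]

theorem not_tauTr_of_downTr {a : M.Wr} {s : S} (h : DownTr M a s) (e : M.Wr) :
    ¬TauTr M a e := by
  unfold DownTr at h; unfold TauTr; simp [h]

theorem wOut_iff_of_wsil {c c' : M.Wr} (h : WSil M c c') (s : S) (d : M.Wr) :
    WOut M c s d ↔ WOut M c' s d :=
  exists_wsil_iff_of_wsil (fun _ ha => not_tauTr_of_outTr ha) h

theorem wDone_iff_of_wsil {c c' : M.Wr} (h : WSil M c c') (s : S) :
    WDone M c s ↔ WDone M c' s :=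
  exists_wsil_iff_of_wsil (fun _ ha => not_tauTr_of_downTr ha) h

theorem WOut.unique {c d d' : M.Wr} {s s' : S} (h : WOut M c s d) (h' : WOut M c s' d') :
    s = s' ∧ d = d' := by
  obtain ⟨a, ha, hout⟩ := h
  obtain ⟨b, hb, hout'⟩ := h'
  cases ha.eq_of_not_tauTr hb (not_tauTr_of_outTr hout) (not_tauTr_of_outTr hout')
  unfold OutTr at hout hout'
  simp_all

theorem WDone.unique {c : M.Wr} {s s' : S} (h : WDone M c s) (h' : WDone M c s') : s = s' := by
  obtain ⟨a, ha, hdown⟩ := h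
  obtain ⟨b, hb, hdown'⟩ := h'
  cases ha.eq_of_not_tauTr hb (not_tauTr_of_downTr hdown) (not_tauTr_of_downTr hdown')
  unfold DownTr at hdown hdown'
  simp_all

theorem WOut.not_wDone {c d : M.Wr} {s s' : S} (h : WOut M c s d) : ¬WDone M c s' := by
  rintro ⟨b, hb, hdown⟩
  obtain ⟨a, ha, hout⟩ := h
  cases ha.eq_of_not_tauTr hb (not_tauTr_of_outTr hout) (not_tauTr_of_downTr hdown)
  unfold OutTr at hout; unfold DownTr at hdown
  simp_all

theorem trcEntry_zero_iff {c : M.Wr} {v : S ⊕ S} :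
    TrcEntry M c 0 v ↔ (∃ s d, WOut M c s d ∧ v = .inl s) ∨ (∃ s, WDone M c s ∧ v = .inr s) := by
  simp [TrcEntry, ReachL]

theorem trcEntry_succ_iff {c : M.Wr} {n : ℕ} {v : S ⊕ S} :
    TrcEntry M c (n + 1) v ↔ ∃ s d, WOut M c s d ∧ TrcEntry M d n v := by
  constructor
  · rintro (⟨l, d, s, d', hl, hlen, hout, rfl⟩ | ⟨l, d, s, hl, hlen, hdone, rfl⟩) <;>
      obtain ⟨s₀, l, rfl⟩ := List.exists_cons_of_length_eq_add_one hlen <;>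
      obtain ⟨c', hc', hl⟩ := hl
    · exact ⟨s₀, c', hc', .inl ⟨l, d, s, d', hl, by simpa using hlen, hout, rfl⟩⟩
    · exact ⟨s₀, c', hc', .inr ⟨l, d, s, hl, by simpa using hlen, hdone, rfl⟩⟩
  · rintro ⟨s₀, c', hc', ⟨l, d, s, d', hl, rfl, hout, rfl⟩ | ⟨l, d, s, hl, rfl, hdone, rfl⟩⟩
    · exact .inl ⟨s₀ :: l, d, s, d', ⟨c', hc', hl⟩, rfl, hout, rfl⟩
    · exact .inr ⟨s₀ :: l, d, s, ⟨c', hc', hl⟩, rfl, hdone, rfl⟩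

theorem trcEntry_iff_of_wsil {c c' : M.Wr} (h : WSil M c c') {n : ℕ} {v : S ⊕ S} :
    TrcEntry M c n v ↔ TrcEntry M c' n v := by
  cases n <;> simp only [trcEntry_zero_iff, trcEntry_succ_iff, wOut_iff_of_wsil h,
    wDone_iff_of_wsil h]

theorem WOut.trcEntry_zero_iff {c d : M.Wr} {s : S} (h : WOut M c s d) {v : S ⊕ S} :
    TrcEntry M c 0 v ↔ v = .inl s := by
  rw [RW.trcEntry_zero_iff]
  constructor
  · rintro (⟨s', d', h', rfl⟩ | ⟨s', h', rfl⟩)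
    · rw [(h.unique h').1]
    · exact absurd h' h.not_wDone
  · rintro rfl
    exact .inl ⟨s, d, h, rfl⟩

theorem WOut.trcEntry_succ_iff {c d : M.Wr} {s : S} (h : WOut M c s d) {n : ℕ} {v : S ⊕ S} :
    TrcEntry M c (n + 1) v ↔ TrcEntry M d n v := by
  rw [RW.trcEntry_succ_iff]
  constructor
  · rintro ⟨s', d', h', hd'⟩
    rwa [(h.unique h').2]
  · exact fun hd => ⟨s, d, h, hd⟩

theorem WDone.trcEntry_zero_iff {c : M.Wr} {s : S} (h : WDone M c s) {v : S ⊕ S} :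
    TrcEntry M c 0 v ↔ v = .inr s := by
  rw [RW.trcEntry_zero_iff]
  constructor
  · rintro (⟨s', d', h', rfl⟩ | ⟨s', h', rfl⟩)
    · exact absurd h h'.not_wDone
    · rw [h.unique h']
  · rintro rfl
    exact .inr ⟨s, h, rfl⟩

theorem WDone.not_trcEntry_succ {c : M.Wr} {s : S} (h : WDone M c s) (n : ℕ) (v : S ⊕ S) :
    ¬TrcEntry M c (n + 1) v := by
  rw [RW.trcEntry_succ_iff]
  rintro ⟨s', d', h', -⟩
  exact h'.not_wDone h

theorem trcW_eq_of_trcEntry_iff {c : M.Wr} {f : ℕ → Option (S ⊕ S)}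
    (h : ∀ n v, TrcEntry M c n v ↔ f n = some v) : trcW M c = f := by
  funext n
  unfold trcW
  split_ifs with hn
  · exact ((h n _).mp hn.choose_spec).symm
  · cases hf : f n with
    | none => rfl
    | some v => exact absurd ⟨v, (h n v).mpr hf⟩ hn

end RW

namespace SOS

open RW

variable {O : Type} {ar : O → ℕ} {S : Type}

section

variable {C : CoolSpec O ar S}

theorem runL_inr_succ (s : S) (n : ℕ) : runL C (.inr s) (n + 1) = none := by
  induction n with
  | zero => rfl
  | succ n ih => rw [runL, ih]

theorem runL_inl_succ (p : Tm O ar) (s : S) (n : ℕ) :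
    runL C (.inl (p, s)) (n + 1) = runL C (stepL C p s) n := by
  induction n with
  | zero => rfl
  | succ n ih => rw [runL, ih, runL]

theorem trcL_zero (p : Tm O ar) (s : S) :
    trcL C p s 0 = some ((stepL C p s).map Prod.snd id) := by
  unfold trcL
  rw [runL_inl_succ]
  rcases stepL C p s with ⟨_, _⟩ | _ <;> rfl

theorem trcL_succ_of_stepL_inl {p p' : Tm O ar} {s s' : S} (h : stepL C p s = .inl (p', s'))
    (n : ℕ) : trcL C p s (n + 1) = trcL C p' s' n := by
  unfold trcL
  rw [runL_inl_succ, h]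

theorem trcL_succ_of_stepL_inr {p : Tm O ar} {s s' : S} (h : stepL C p s = .inr s') (n : ℕ) :
    trcL C p s (n + 1) = none := by
  unfold trcL
  rw [runL_inl_succ, h, runL_inr_succ]

theorem tauTr_run (p : Tm O ar) (s : S) : TauTr (L2Model C) (.run p s) (rstep2 C p s) := rfl

theorem rstep2_op_of_mode_inl {f : O} {o : S → (OTm O ar (Fin (ar f)) × S) ⊕ S}
    (h : C.mode f = .inl o) (as : Fin (ar f) → Tm O ar) (s : S) :
    rstep2 C (.op f as) s = match o s with
      | .inl (t, s') => .out s' (.run (t.subst as) s')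
      | .inr s' => .ret s' := by
  dsimp only [rstep2]
  split
  · next o' h' =>
    rw [h] at h'
    cases h'
    rfl
  · simp_all

theorem rstep2_op_of_mode_inr {f : O} {j : Fin (ar f)}
    {o : S → (OTm O ar {i : Fin (ar f) // i ≠ j} × S) ⊕ S} (h : C.mode f = .inr ⟨j, o⟩)
    (as : Fin (ar f) → Tm O ar) (s : S) :
    rstep2 C (.op f as) s = .act f j o h (fun i => as i.1) (.run (as j) s) := by
  dsimp only [rstep2]
  split
  · simp_all
  · next j' o' h' =>
    rw [h] at h'
    cases h'
    rfl

section Act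

variable {f : O} {j : Fin (ar f)} {o : S → (OTm O ar {i : Fin (ar f) // i ≠ j} × S) ⊕ S}
  {h : C.mode f = .inr ⟨j, o⟩} {ps : {i : Fin (ar f) // i ≠ j} → Tm O ar} {c d : WTm C}

theorem tauTr_act (hc : TauTr (L2Model C) c d) :
    TauTr (L2Model C) (.act f j o h ps c) (.act f j o h ps d) := by
  change wstep2 C c = _ at hc
  change wstep2 C _ = _
  rw [wstep2, hc]
  rfl

theorem outTr_act {s : S} (hc : OutTr (L2Model C) c s d) :
    OutTr (L2Model C) (.act f j o h ps c) s (.act f j o h ps d) := by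
  change wstep2 C c = _ at hc
  change wstep2 C _ = _
  rw [wstep2, hc]
  rfl

theorem wsil_act (hc : WSil (L2Model C) c d) :
    WSil (L2Model C) (.act f j o h ps c) (.act f j o h ps d) :=
  hc.lift (WTm.act f j o h ps) fun _ _ => tauTr_act

theorem wOut_act {s : S} (hc : WOut (L2Model C) c s d) :
    WOut (L2Model C) (.act f j o h ps c) s (.act f j o h ps d) :=
  let ⟨_, hsil, hout⟩ := hc
  ⟨_, wsil_act hsil, outTr_act hout⟩

theorem wOut_act_of_wDone {s' s'' : S} {t : OTm O ar {i : Fin (ar f) // i ≠ j}}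
    (hc : WDone (L2Model C) c s') (ho : o s' = .inl (t, s'')) :
    WOut (L2Model C) (.act f j o h ps c) s'' (.run (t.subst ps) s'') := by
  obtain ⟨c', hsil, hdown⟩ := hc
  refine ⟨_, wsil_act hsil, ?_⟩
  change wstep2 C c' = _ at hdown
  change wstep2 C _ = _
  simp only [wstep2, hdown, ho]
  rfl

theorem wDone_act_of_wDone {s' s'' : S} (hc : WDone (L2Model C) c s') (ho : o s' = .inr s'') :
    WDone (L2Model C) (.act f j o h ps c) s'' := by
  obtain ⟨c', hsil, hdown⟩ := hc
  refine ⟨_, wsil_act hsil, ?_⟩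
  change wstep2 C c' = _ at hdown
  change wstep2 C _ = _
  simp only [wstep2, hdown, ho]
  rfl

end Act

def Simulates (C : CoolSpec O ar S) (c : WTm C) : (Tm O ar × S) ⊕ S → Prop
  | .inl (p', s') => ∃ d, WOut (L2Model C) c s' d ∧ WSil (L2Model C) (.run p' s') d
  | .inr s' => WDone (L2Model C) c s'

theorem Simulates.of_tauTr {c c' : WTm C} {r : (Tm O ar × S) ⊕ S} (h : TauTr (L2Model C) c c')
    (hc : Simulates C c' r) : Simulates C c r := by
  rcases r with ⟨p', s'⟩ | s'
  · obtain ⟨d, hout, hsil⟩ := hc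
    exact ⟨d, (wOut_iff_of_wsil (.single h) _ _).mpr hout, hsil⟩
  · exact (wDone_iff_of_wsil (.single h) _).mpr hc

theorem simulates_run_op_of_mode_inl {f : O} {o : S → (OTm O ar (Fin (ar f)) × S) ⊕ S}
    (h : C.mode f = .inl o) (as : Fin (ar f) → Tm O ar) (s : S) :
    Simulates C (.run (.op f as) s) (stepL C (.op f as) s) := by
  have hτ := tauTr_run (C := C) (.op f as) s
  rw [rstep2_op_of_mode_inl h] at hτ
  simp only [stepL, h]
  cases ho : o s with
  | inl ts =>
    simp only [ho] at hτ
    exact ⟨_, ⟨_, .single hτ, rfl⟩, .refl⟩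
  | inr s' =>
    simp only [ho] at hτ
    exact ⟨_, .single hτ, rfl⟩

theorem simulates_run_op_of_mode_inr {f : O} {j : Fin (ar f)}
    {o : S → (OTm O ar {i : Fin (ar f) // i ≠ j} × S) ⊕ S} (h : C.mode f = .inr ⟨j, o⟩)
    (as : Fin (ar f) → Tm O ar) (s : S)
    (ih : Simulates C (.run (as j) s) (stepL C (as j) s)) :
    Simulates C (.run (.op f as) s) (stepL C (.op f as) s) := by
  have hτ := tauTr_run (C := C) (.op f as) s
  rw [rstep2_op_of_mode_inr h] at hτ
  refine Simulates.of_tauTr hτ ?_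
  simp only [stepL, h]
  cases hstep : stepL C (as j) s with
  | inl qs =>
    obtain ⟨q, s'⟩ := qs
    rw [hstep] at ih
    obtain ⟨d, hout, hsil⟩ := ih
    have hτ' := tauTr_run (C := C) (.op f (updFn as j q)) s'
    have hps : (fun i : {i // i ≠ j} => updFn as j q i.1) = fun i => as i.1 :=
      funext fun i => if_neg i.2
    rw [rstep2_op_of_mode_inr h, hps, show updFn as j q j = q from if_pos rfl] at hτ'
    exact ⟨_, wOut_act hout, .head hτ' (wsil_act hsil)⟩
  | inr s' =>
    rw [hstep] at ih
    cases ho : o s' with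
    | inl ts =>
      simp only [ho]
      exact ⟨_, wOut_act_of_wDone ih ho, .refl⟩
    | inr s'' =>
      simp only [ho]
      exact wDone_act_of_wDone ih ho

theorem simulates_run_stepL (p : Tm O ar) (s : S) : Simulates C (.run p s) (stepL C p s) := by
  induction p generalizing s with
  | var v => exact v.elim
  | op f as ih =>
    rcases hmode : C.mode f with o | ⟨j, o⟩
    · exact simulates_run_op_of_mode_inl hmode as s
    · exact simulates_run_op_of_mode_inr hmode as s (ih j s)

end

theorem trcEntry_run_iff (C : CoolSpec O ar S) (p : Tm O ar) (s : S) (n : ℕ) (v : S ⊕ S) :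
    TrcEntry (L2Model C) (.run p s) n v ↔ trcL C p s n = some v := by
  induction n generalizing p s with
  | zero =>
    have hsim := simulates_run_stepL (C := C) p s
    rw [trcL_zero]
    rcases hstep : stepL C p s with ⟨p', s'⟩ | s' <;> rw [hstep] at hsim
    · obtain ⟨d, hout, -⟩ := hsim
      rw [hout.trcEntry_zero_iff, Option.some_inj, eq_comm]
      rfl
    · rw [WDone.trcEntry_zero_iff hsim, Option.some_inj, eq_comm]
      rfl
  | succ n ih =>
    have hsim := simulates_run_stepL (C := C) p s
    rcases hstep : stepL C p s with ⟨p', s'⟩ | s' <;> rw [hstep] at hsim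
    · obtain ⟨d, hout, hsil⟩ := hsim
      rw [hout.trcEntry_succ_iff, ← trcEntry_iff_of_wsil hsil, ih, trcL_succ_of_stepL_inl hstep]
    · rw [trcL_succ_of_stepL_inr hstep]
      simpa using WDone.not_trcEntry_succ hsim n v

theorem trcL_eq_trcR (C : CoolSpec O ar S) (p : Tm O ar) (s : S) :
    trcL C p s = trcR (L2Model C) p s := by
  refine (trcW_eq_of_trcEntry_iff fun n v => ?_).symm
  exact (trcEntry_iff_of_wsil (.single (tauTr_run p s))).symm.trans (trcEntry_run_iff C p s n v)

/-- for every cool stateful SOS specification, every closed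
`Θ`-term `p` and every state `s`, the trace, cost and termination semantics of `p`
in the operational model `γ^L` and as a reader of `γ^{L²}` coincide. -/
theorem l_l2_semantics_coincide (C : CoolSpec O ar S) (p : Tm O ar) (s : S) :
    trcL C p s = trcR (L2Model C) p s ∧
    cstL C p s = cstR (L2Model C) p s ∧
    terL C p s = terR (L2Model C) p s := by
  have htrc := trcL_eq_trcR C p s
  have hcst : cstL C p s = cstR (L2Model C) p s := by
    unfold cstL cstR cstW
    rw [htrc]
    rfl
  exact ⟨htrc, hcst, congrArg (Option.map Prod.snd) hcst⟩

end SOS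
end

section
/- For every cool stateful SOS specification L, trace equivalence, cost equivalence, and termination equivalence are congruences on the operational model γ^L of L: for every n-ary operator f ∈ Θ and closed Θ-terms p₁,…,pₙ, p'₁,…,p'ₙ, if pᵢ and p'ᵢ are trace (resp. cost, termination) equivalent for all i, then f(p₁,…,pₙ) and f(p'₁,…,p'ₙ) are trace (resp. cost, termination) equivalent. -/
namespace SOS

variable {O : Type} {ar : O → ℕ} {S : Type}


section Aux

/-- Extract the trace entry from a run result. -/
def entE : Option ((Tm O ar × S) ⊕ S) → Option (S ⊕ S)
  | some (.inl (_, s')) => some (.inl s')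
  | some (.inr s') => some (.inr s')
  | none => none

lemma trcL_eq_ent (C : CoolSpec O ar S) (p : Tm O ar) (s : S) (n : ℕ) :
    trcL C p s n = entE (runL C (.inl (p, s)) (n + 1)) := by
  simp only [trcL, entE]

lemma entE_eq_inr {x : Option ((Tm O ar × S) ⊕ S)} {s' : S} :
    entE x = some (.inr s') ↔ x = some (.inr s') := by
  rcases x with _ | (⟨q, t⟩ | u) <;> simp [entE]

lemma entE_eq_inl {x : Option ((Tm O ar × S) ⊕ S)} {s' : S} :
    entE x = some (.inl s') ↔ ∃ q, x = some (.inl (q, s')) := by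
  rcases x with _ | (⟨q, t⟩ | u) <;> simp [entE]

lemma entE_eq_none {x : Option ((Tm O ar × S) ⊕ S)} :
    entE x = none ↔ x = none := by
  rcases x with _ | (⟨q, t⟩ | u) <;> simp [entE]

lemma runL_zero (C : CoolSpec O ar S) (x) : runL C x 0 = some x := rfl

lemma runL_succ (C : CoolSpec O ar S) (x n) :
    runL C x (n + 1) = match runL C x n with
      | some (.inl (p, s)) => some (stepL C p s)
      | _ => none := rfl

lemma runL_succ_of_inl {C : CoolSpec O ar S} {x n p s}
    (h : runL C x n = some (.inl (p, s))) :
    runL C x (n + 1) = some (stepL C p s) := by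
  rw [runL_succ, h]

lemma runL_succ_elim {C : CoolSpec O ar S} {x n y}
    (h : runL C x (n + 1) = some y) :
    ∃ p s, runL C x n = some (.inl (p, s)) ∧ y = stepL C p s := by
  rw [runL_succ] at h
  rcases hx : runL C x n with _ | (⟨p, s⟩ | u) <;> rw [hx] at h
  · exact absurd h (by simp)
  · exact ⟨p, s, rfl, (Option.some_injective _ h).symm⟩
  · exact absurd h (by simp)

lemma runL_inr (C : CoolSpec O ar S) (s : S) (n : ℕ) :
    runL C (.inr s) (n + 1) = none := by
  induction n with
  | zero => rfl
  | succ n ih => rw [runL_succ, ih]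

lemma runL_add (C : CoolSpec O ar S) (x : (Tm O ar × S) ⊕ S) (a b : ℕ) :
    runL C x (a + b) = match runL C x a with
      | some y => runL C y b
      | none => none := by
  induction b with
  | zero =>
      rcases h : runL C x a with _ | y <;> simp [h, runL_zero]
  | succ b ih =>
      rw [show a + (b+1) = (a+b)+1 from rfl, runL_succ, ih]
      rcases h : runL C x a with _ | y
      · rfl
      · exact (runL_succ C y b).symm

end Aux


section Aux2

lemma updFn_self {f : O} (as : Fin (ar f) → Tm O ar) (j : Fin (ar f)) :
    updFn as j (as j) = as := by
  funext i; unfold updFn; split <;> simp_all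

lemma updFn_apply_j {f : O} (as : Fin (ar f) → Tm O ar) (j : Fin (ar f)) (q) :
    updFn as j q j = q := by simp [updFn]

lemma updFn_apply_ne {f : O} (as : Fin (ar f) → Tm O ar) {j i : Fin (ar f)} (q)
    (h : i ≠ j) : updFn as j q i = as i := by simp [updFn, h]

lemma updFn_updFn {f : O} (as : Fin (ar f) → Tm O ar) (j : Fin (ar f)) (q q') :
    updFn (updFn as j q) j q' = updFn as j q' := by
  funext i; unfold updFn; split <;> simp_all [updFn]

variable {C : CoolSpec O ar S} {f : O}

lemma stepL_passive {o : S → (OTm O ar (Fin (ar f)) × S) ⊕ S}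
    (h : C.mode f = .inl o) (as : Fin (ar f) → Tm O ar) (s : S) :
    stepL C (.op f as) s = match o s with
      | .inl (t, s') => .inl (t.subst (fun i => as i), s')
      | .inr s' => .inr s' := by
  rw [stepL, h]

lemma stepL_act {j : Fin (ar f)} {o : S → (OTm O ar {i : Fin (ar f) // i ≠ j} × S) ⊕ S}
    (h : C.mode f = .inr ⟨j, o⟩) (as : Fin (ar f) → Tm O ar) (s : S) :
    stepL C (.op f as) s = match stepL C (as j) s with
      | .inl (p', s') => .inl (.op f (updFn as j p'), s')
      | .inr s' => match o s' with
          | .inl (t, s'') => .inl (t.subst (fun i => as i.1), s'')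
          | .inr s'' => .inr s'' := by
  rw [stepL, h]

lemma run_act {j : Fin (ar f)} {o : S → (OTm O ar {i : Fin (ar f) // i ≠ j} × S) ⊕ S}
    (h : C.mode f = .inr ⟨j, o⟩) (as : Fin (ar f) → Tm O ar) {s : S} :
    ∀ {k q s₁}, runL C (.inl (as j, s)) k = some (.inl (q, s₁)) →
      runL C (.inl (.op f as, s)) k = some (.inl (.op f (updFn as j q), s₁)) := by
  intro k
  induction k with
  | zero =>
      intro q s₁ hq
      rw [runL_zero] at hq
      simp only [Option.some.injEq, Sum.inl.injEq, Prod.mk.injEq] at hq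
      obtain ⟨h1, h2⟩ := hq
      subst h1; subst h2
      rw [runL_zero, updFn_self]
  | succ k ih =>
      intro q s₁ hq
      obtain ⟨p, s₀, hp, hstep⟩ := runL_succ_elim hq
      rw [runL_succ_of_inl (ih hp), stepL_act h, updFn_apply_j, ← hstep]
      simp only [updFn_updFn]

end Aux2


section Aux3

variable {C : CoolSpec O ar S} {f : O}

lemma run_dichotomy (C : CoolSpec O ar S) (p : Tm O ar) (s : S) (n : ℕ) :
    (∃ q s₁, runL C (.inl (p, s)) n = some (.inl (q, s₁))) ∨
    (∃ k s' q s₁, k < n ∧ runL C (.inl (p, s)) k = some (.inl (q, s₁)) ∧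
      stepL C q s₁ = .inr s') := by
  induction n with
  | zero => exact .inl ⟨p, s, runL_zero C _⟩
  | succ n ih =>
      rcases ih with ⟨q, s₁, hq⟩ | ⟨k, s', q, s₁, hk, hq, hs⟩
      · rcases hst : stepL C q s₁ with ⟨q', s₂⟩ | s'
        · exact .inl ⟨q', s₂, by rw [runL_succ_of_inl hq, hst]⟩
        · exact .inr ⟨n, s', q, s₁, Nat.lt_succ_self n, hq, hst⟩
      · exact .inr ⟨k, s', q, s₁, Nat.lt_succ_of_lt hk, hq, hs⟩

lemma run_term_succ {p : Tm O ar} {s s' : S} {q s₁ k}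
    (hq : runL C (.inl (p, s)) k = some (.inl (q, s₁)))
    (hs : stepL C q s₁ = .inr s') :
    runL C (.inl (p, s)) (k + 1) = some (.inr s') := by
  rw [runL_succ_of_inl hq, hs]

lemma run_term_elim {p : Tm O ar} {s s' : S} {k}
    (h : runL C (.inl (p, s)) (k + 1) = some (.inr s')) :
    ∃ q s₁, runL C (.inl (p, s)) k = some (.inl (q, s₁)) ∧
      stepL C q s₁ = .inr s' := by
  obtain ⟨q, s₁, hq, he⟩ := runL_succ_elim h
  exact ⟨q, s₁, hq, he.symm⟩

lemma run_none_of_term {p : Tm O ar} {s s' : S} {k m : ℕ}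
    (h : runL C (.inl (p, s)) k = some (.inr s')) (hm : k < m) :
    runL C (.inl (p, s)) m = none := by
  obtain ⟨r, rfl⟩ := Nat.exists_eq_add_of_lt hm
  rw [show k + r + 1 = k + (r + 1) from rfl, runL_add, h]
  exact runL_inr C s' r

lemma trc_inr_unique {p : Tm O ar} {s : S} {n m : ℕ} {a b : S}
    (hn : trcL C p s n = some (.inr a)) (hm : trcL C p s m = some (.inr b)) :
    n = m ∧ a = b := by
  rw [trcL_eq_ent, entE_eq_inr] at hn hm
  rcases Nat.lt_trichotomy n m with h | h | h
  · rw [run_none_of_term hn (by omega)] at hm; exact absurd hm (by simp)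
  · subst h; rw [hn] at hm
    exact ⟨rfl, by simpa using Option.some_injective _ hm⟩
  · rw [run_none_of_term hm (by omega)] at hn; exact absurd hn (by simp)

lemma cstL_eq_some_iff {p : Tm O ar} {s : S} {n : ℕ} {sf : S} :
    cstL C p s = some (n, sf) ↔ trcL C p s n = some (.inr sf) := by
  constructor
  · intro h
    unfold cstL at h
    split at h
    · rename_i he
      have hc := he.choose_spec
      have h2 := Option.some_injective _ h
      rw [h2] at hc
      simpa using hc
    · exact absurd h (by simp)
  · intro h
    unfold cstL
    have he : ∃ ns : ℕ × S, trcL C p s ns.1 = some (.inr ns.2) := ⟨(n, sf), h⟩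
    rw [dif_pos he]
    have hc := he.choose_spec
    obtain ⟨h1, h2⟩ := trc_inr_unique hc h
    have : he.choose = (n, sf) := Prod.ext h1 h2
    rw [this]

lemma cstL_eq_none_iff {p : Tm O ar} {s : S} :
    cstL C p s = none ↔ ∀ n sf, trcL C p s n ≠ some (.inr sf) := by
  constructor
  · intro h n sf hc
    rw [cstL_eq_some_iff.2 hc] at h
    exact absurd h (by simp)
  · intro h
    unfold cstL
    rw [dif_neg]
    rintro ⟨ns, hns⟩
    exact h ns.1 ns.2 hns

lemma terL_eq_some_iff {p : Tm O ar} {s : S} {sf : S} :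
    terL C p s = some sf ↔ ∃ n, cstL C p s = some (n, sf) := by
  unfold terL
  rcases h : cstL C p s with _ | ⟨n, a⟩ <;> simp [h]

lemma terL_eq_none_iff {p : Tm O ar} {s : S} :
    terL C p s = none ↔ cstL C p s = none := by
  unfold terL
  rcases h : cstL C p s with _ | ⟨n, a⟩ <;> simp [h]

/-- Trace of a passive operator, terminating rule. -/
lemma trc_passive_inr {o : S → (OTm O ar (Fin (ar f)) × S) ⊕ S}
    (h : C.mode f = .inl o) (as : Fin (ar f) → Tm O ar) {s s' : S}
    (ho : o s = .inr s') (n : ℕ) :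
    trcL C (.op f as) s n = if n = 0 then some (.inr s') else none := by
  have hstep : stepL C (.op f as) s = .inr s' := by rw [stepL_passive h, ho]
  have h1 : runL C (.inl (.op f as, s)) 1 = some (.inr s') := by
    rw [runL_succ_of_inl (runL_zero C _), hstep]
  rcases n with _ | n
  · rw [trcL_eq_ent, h1]; rfl
  · rw [trcL_eq_ent, run_none_of_term h1 (by omega)]; simp [entE]

/-- Trace of a passive operator, transition rule: step 0. -/
lemma trc_passive_inl_zero {o : S → (OTm O ar (Fin (ar f)) × S) ⊕ S}
    (h : C.mode f = .inl o) (as : Fin (ar f) → Tm O ar) {s s' : S}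
    {t : OTm O ar (Fin (ar f))} (ho : o s = .inl (t, s')) :
    trcL C (.op f as) s 0 = some (.inl s') := by
  have hstep : stepL C (.op f as) s = .inl (t.subst (fun i => as i), s') := by
    rw [stepL_passive h, ho]
  rw [trcL_eq_ent, runL_succ_of_inl (runL_zero C _), hstep]; rfl

/-- Trace of a passive operator, transition rule: later steps. -/
lemma trc_passive_inl_succ {o : S → (OTm O ar (Fin (ar f)) × S) ⊕ S}
    (h : C.mode f = .inl o) (as : Fin (ar f) → Tm O ar) {s s' : S}
    {t : OTm O ar (Fin (ar f))} (ho : o s = .inl (t, s')) (n : ℕ) :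
    trcL C (.op f as) s (n + 1) = trcL C (t.subst (fun i => as i)) s' n := by
  have hstep : stepL C (.op f as) s = .inl (t.subst (fun i => as i), s') := by
    rw [stepL_passive h, ho]
  rw [trcL_eq_ent, trcL_eq_ent]
  congr 1
  rw [show n + 1 + 1 = 1 + (n + 1) from by omega, runL_add,
    runL_succ_of_inl (runL_zero C _), hstep]

end Aux3


section Aux4

variable {C : CoolSpec O ar S} {f : O} {j : Fin (ar f)}
  {o : S → (OTm O ar {i : Fin (ar f) // i ≠ j} × S) ⊕ S}

lemma subst_updFn_ne (as : Fin (ar f) → Tm O ar) (q : Tm O ar) :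
    (fun i : {i : Fin (ar f) // i ≠ j} => updFn as j q i.1) =
      (fun i : {i : Fin (ar f) // i ≠ j} => as i.1) := by
  funext i; exact updFn_apply_ne as q i.2

lemma run_act_term_inl (h : C.mode f = .inr ⟨j, o⟩) (as : Fin (ar f) → Tm O ar)
    {s s₁ s' s'' : S} {q : Tm O ar} {k : ℕ} {t : OTm O ar {i : Fin (ar f) // i ≠ j}}
    (hq : runL C (.inl (as j, s)) k = some (.inl (q, s₁)))
    (hs : stepL C q s₁ = .inr s') (ho : o s' = .inl (t, s'')) :
    runL C (.inl (.op f as, s)) (k + 1) =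
      some (.inl (t.subst (fun i => as i.1), s'')) := by
  rw [runL_succ_of_inl (run_act h as hq), stepL_act h, updFn_apply_j, hs]
  simp only [ho, subst_updFn_ne]

lemma run_act_term_inr (h : C.mode f = .inr ⟨j, o⟩) (as : Fin (ar f) → Tm O ar)
    {s s₁ s' s'' : S} {q : Tm O ar} {k : ℕ}
    (hq : runL C (.inl (as j, s)) k = some (.inl (q, s₁)))
    (hs : stepL C q s₁ = .inr s') (ho : o s' = .inr s'') :
    runL C (.inl (.op f as, s)) (k + 1) = some (.inr s'') := by
  rw [runL_succ_of_inl (run_act h as hq), stepL_act h, updFn_apply_j, hs]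
  simp only [ho]

lemma trcL_congr_run {p p' : Tm O ar} {s s' : S} {n m : ℕ}
    (h : runL C (.inl (p, s)) (n + 1) = runL C (.inl (p', s')) (m + 1)) :
    trcL C p s n = trcL C p' s' m := by
  rw [trcL_eq_ent, trcL_eq_ent, h]

lemma run_shift {p p' : Tm O ar} {s s' : S} {k r : ℕ}
    (h : runL C (.inl (p, s)) k = some (.inl (p', s'))) :
    runL C (.inl (p, s)) (k + r) = runL C (.inl (p', s')) r := by
  rw [runL_add, h]

end Aux4


/-- Main lemma for trace congruence: positionwise, by strong induction on the
position and structural induction on the term. -/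
lemma trc_main (C : CoolSpec O ar S) :
    ∀ n : ℕ, ∀ {V : Type} (t : OTm O ar V) (σ σ' : V → Tm O ar),
      (∀ v s m, m ≤ n → trcL C (σ v) s m = trcL C (σ' v) s m) →
      ∀ s, trcL C (t.subst σ) s n = trcL C (t.subst σ') s n := by
  intro n
  induction n using Nat.strong_induction_on with
  | _ n IH =>
    intro V t
    induction t with
    | var v => intro σ σ' hσ s; exact hσ v s n le_rfl
    | op f bs iht =>
      intro σ σ' hσ s
      have hcomp : ∀ (i : Fin (ar f)) s m, m ≤ n →
          trcL C ((bs i).subst σ) s m = trcL C ((bs i).subst σ') s m := by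
        intro i s m hm
        rcases Nat.lt_or_ge m n with h | h
        · exact IH m h (bs i) σ σ' (fun v s k hk => hσ v s k (le_trans hk h.le)) s
        · have hmn : m = n := le_antisymm hm h
          subst hmn
          exact iht i σ σ' hσ s
      show trcL C (.op f fun i => (bs i).subst σ) s n
         = trcL C (.op f fun i => (bs i).subst σ') s n
      set as := fun i => (bs i).subst σ with has
      set as' := fun i => (bs i).subst σ' with has'
      rcases hmode : C.mode f with o | ⟨j, o⟩
      · -- passive operator
        rcases ho : o s with ⟨t', s'⟩ | s'
        · rcases n with _ | m
          · rw [trc_passive_inl_zero hmode as ho, trc_passive_inl_zero hmode as' ho]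
          · rw [trc_passive_inl_succ hmode as ho, trc_passive_inl_succ hmode as' ho]
            exact IH m (Nat.lt_succ_self m) t' as as'
              (fun i s k hk => hcomp i s k (le_trans hk (Nat.le_succ m))) s'
        · rw [trc_passive_inr hmode as ho, trc_passive_inr hmode as' ho]
      · -- active operator with receiving position j
        rcases run_dichotomy C (as j) s (n+1) with ⟨q, s₁, hq⟩ | ⟨k, s', q, s₁, hk, hq, hs⟩
        · -- argument still running at time n+1
          have h1 : trcL C (as j) s n = some (.inl s₁) := by
            rw [trcL_eq_ent, entE_eq_inl]; exact ⟨q, hq⟩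
          have h2 : trcL C (as' j) s n = some (.inl s₁) := by
            rw [← hcomp j s n le_rfl]; exact h1
          rw [trcL_eq_ent, entE_eq_inl] at h2
          obtain ⟨q', hq'⟩ := h2
          have e1 : trcL C (.op f as) s n = some (.inl s₁) := by
            rw [trcL_eq_ent, run_act hmode as hq]; rfl
          have e2 : trcL C (.op f as') s n = some (.inl s₁) := by
            rw [trcL_eq_ent, run_act hmode as' hq']; rfl
          rw [e1, e2]
        · -- argument terminates at time k+1 ≤ n+1 with state s'
          have hk' : k ≤ n := Nat.lt_succ_iff.mp hk
          have htk : trcL C (as j) s k = some (.inr s') := by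
            rw [trcL_eq_ent, entE_eq_inr]
            exact run_term_succ hq hs
          have htk' : trcL C (as' j) s k = some (.inr s') := by
            rw [← hcomp j s k hk']; exact htk
          rw [trcL_eq_ent, entE_eq_inr] at htk'
          obtain ⟨q', s₁', hq', hs'⟩ := run_term_elim htk'
          rcases ho : o s' with ⟨t', s''⟩ | s''
          · -- continuation rule
            have r1 := run_act_term_inl hmode as hq hs ho
            have r2 := run_act_term_inl hmode as' hq' hs' ho
            rcases Nat.lt_or_ge k n with hkn | hkn
            · obtain ⟨m, rfl⟩ : ∃ m, n = k + 1 + m := ⟨n - (k+1), by omega⟩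
              have e1 : trcL C (.op f as) s (k+1+m)
                  = trcL C (t'.subst fun i => as i.1) s'' m :=
                trcL_congr_run
                  (by rw [show k+1+m+1 = (k+1) + (m+1) from by omega, run_shift r1])
              have e2 : trcL C (.op f as') s (k+1+m)
                  = trcL C (t'.subst fun i => as' i.1) s'' m :=
                trcL_congr_run
                  (by rw [show k+1+m+1 = (k+1) + (m+1) from by omega, run_shift r2])
              rw [e1, e2]
              exact IH m (by omega) t' _ _
                (fun i s kk hkk => hcomp i.1 s kk (by omega)) s''
            · have hke : k = n := le_antisymm hk' hkn
              subst hke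
              have e1 : trcL C (.op f as) s k = some (.inl s'') := by
                rw [trcL_eq_ent, r1]; rfl
              have e2 : trcL C (.op f as') s k = some (.inl s'') := by
                rw [trcL_eq_ent, r2]; rfl
              rw [e1, e2]
          · -- terminating rule
            have r1 := run_act_term_inr hmode as hq hs ho
            have r2 := run_act_term_inr hmode as' hq' hs' ho
            rcases Nat.lt_or_ge k n with hkn | hkn
            · have e1 : trcL C (.op f as) s n = none := by
                rw [trcL_eq_ent, entE_eq_none]
                exact run_none_of_term r1 (by omega)
              have e2 : trcL C (.op f as') s n = none := by
                rw [trcL_eq_ent, entE_eq_none]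
                exact run_none_of_term r2 (by omega)
              rw [e1, e2]
            · have hke : k = n := le_antisymm hk' hkn
              subst hke
              have e1 : trcL C (.op f as) s k = some (.inr s'') := by
                rw [trcL_eq_ent, entE_eq_inr]; exact r1
              have e2 : trcL C (.op f as') s k = some (.inr s'') := by
                rw [trcL_eq_ent, entE_eq_inr]; exact r2
              rw [e1, e2]


section Aux5
variable {C : CoolSpec O ar S}

lemma trc_of_run_inl {p q : Tm O ar} {s s₁ : S} {n : ℕ}
    (h : runL C (.inl (p, s)) (n + 1) = some (.inl (q, s₁))) :
    trcL C p s n = some (.inl s₁) := by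
  rw [trcL_eq_ent, h]; rfl

lemma trc_of_run_inr {p : Tm O ar} {s s₁ : S} {n : ℕ}
    (h : runL C (.inl (p, s)) (n + 1) = some (.inr s₁)) :
    trcL C p s n = some (.inr s₁) := by
  rw [trcL_eq_ent, h]; rfl

end Aux5

/-- Main lemma for cost congruence: by strong induction on the cost and
structural induction on the term. -/
lemma cst_main (C : CoolSpec O ar S) :
    ∀ n : ℕ, ∀ {V : Type} (t : OTm O ar V) (σ σ' : V → Tm O ar),
      (∀ v s m sf, m ≤ n →
        (cstL C (σ v) s = some (m, sf) ↔ cstL C (σ' v) s = some (m, sf))) →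
      ∀ s sf, cstL C (t.subst σ) s = some (n, sf) →
        cstL C (t.subst σ') s = some (n, sf) := by
  intro n
  induction n using Nat.strong_induction_on with
  | _ n IH =>
    intro V t
    induction t with
    | var v => intro σ σ' hσ s sf h; exact (hσ v s n sf le_rfl).1 h
    | op f bs iht =>
      intro σ σ' hσ s sf hL
      have hcomp : ∀ (i : Fin (ar f)) s m sf, m ≤ n →
          (cstL C ((bs i).subst σ) s = some (m, sf) ↔
           cstL C ((bs i).subst σ') s = some (m, sf)) := by
        intro i s m sf hm
        have hσs : ∀ v s k sf, k ≤ m →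
            (cstL C (σ' v) s = some (k, sf) ↔ cstL C (σ v) s = some (k, sf)) :=
          fun v s k sf hk => (hσ v s k sf (le_trans hk hm)).symm
        rcases Nat.lt_or_ge m n with h | h
        · exact ⟨IH m h (bs i) σ σ' (fun v s k sf hk => hσ v s k sf (by omega)) s sf,
            IH m h (bs i) σ' σ hσs s sf⟩
        · have hmn : m = n := le_antisymm hm h
          subst hmn
          exact ⟨iht i σ σ' hσ s sf, iht i σ' σ hσs s sf⟩
      rw [cstL_eq_some_iff] at hL
      rw [cstL_eq_some_iff]
      revert hL
      show trcL C (.op f fun i => (bs i).subst σ) s n = some (.inr sf) →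
        trcL C (.op f fun i => (bs i).subst σ') s n = some (.inr sf)
      set as := fun i => (bs i).subst σ with has
      set as' := fun i => (bs i).subst σ' with has'
      intro hL
      rcases hmode : C.mode f with o | ⟨j, o⟩
      · -- passive operator
        rcases ho : o s with ⟨t', s'⟩ | s'
        · rcases n with _ | m
          · rw [trc_passive_inl_zero hmode as ho] at hL
            exact absurd hL (by simp)
          · rw [trc_passive_inl_succ hmode as ho] at hL
            rw [trc_passive_inl_succ hmode as' ho]
            rw [← cstL_eq_some_iff] at hL ⊢
            exact IH m (Nat.lt_succ_self m) t' as as'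
              (fun i s k sfk hk => hcomp i s k sfk (by omega)) s' sf hL
        · rw [trc_passive_inr hmode as ho] at hL
          rw [trc_passive_inr hmode as' ho]
          rcases n with _ | m
          · exact hL
          · exact absurd hL (by simp)
      · -- active operator
        rcases run_dichotomy C (as j) s (n+1) with ⟨q, s₁, hq⟩ | ⟨k, s', q, s₁, hk, hq, hs⟩
        · -- argument still running at n+1: contradiction with termination entry
          have e1 : trcL C (.op f as) s n = some (.inl s₁) :=
            trc_of_run_inl (run_act hmode as hq)
          rw [hL] at e1
          exact absurd e1 (by simp)
        · have hk' : k ≤ n := Nat.lt_succ_iff.mp hk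
          have htk : cstL C (as j) s = some (k, s') :=
            cstL_eq_some_iff.2 (trc_of_run_inr (run_term_succ hq hs))
          have htk' : cstL C (as' j) s = some (k, s') := (hcomp j s k s' hk').1 htk
          rw [cstL_eq_some_iff, trcL_eq_ent, entE_eq_inr] at htk'
          obtain ⟨q', s₁', hq', hs'⟩ := run_term_elim htk'
          rcases ho : o s' with ⟨t', s''⟩ | s''
          · -- continuation rule
            have r1 := run_act_term_inl hmode as hq hs ho
            have r2 := run_act_term_inl hmode as' hq' hs' ho
            have hkn : k < n := by
              rcases Nat.lt_trichotomy n k with h | h | h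
              · have := run_none_of_term (by rw [trcL_eq_ent, entE_eq_inr] at hL; exact hL)
                  (show n + 1 < k + 1 by omega)
                rw [this] at r1
                exact absurd r1 (by simp)
              · subst h
                have := trc_of_run_inl r1
                rw [hL] at this
                exact absurd this (by simp)
              · exact h
            obtain ⟨m, rfl⟩ : ∃ m, n = k + 1 + m := ⟨n - (k+1), by omega⟩
            have e1 : trcL C (.op f as) s (k+1+m)
                = trcL C (t'.subst fun i => as i.1) s'' m :=
              trcL_congr_run
                (by rw [show k+1+m+1 = (k+1) + (m+1) from by omega, run_shift r1])
            have e2 : trcL C (.op f as') s (k+1+m)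
                = trcL C (t'.subst fun i => as' i.1) s'' m :=
              trcL_congr_run
                (by rw [show k+1+m+1 = (k+1) + (m+1) from by omega, run_shift r2])
            rw [e1] at hL
            rw [e2, ← cstL_eq_some_iff]
            exact IH m (by omega) t' _ _
              (fun i s kk sfk hkk => hcomp i.1 s kk sfk (by omega)) s'' sf
              (cstL_eq_some_iff.2 hL)
          · -- terminating rule
            have r1 := run_act_term_inr hmode as hq hs ho
            have r2 := run_act_term_inr hmode as' hq' hs' ho
            obtain ⟨hnk, hsf⟩ := trc_inr_unique hL (trc_of_run_inr r1)
            subst hnk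
            rw [hsf]
            exact trc_of_run_inr r2


/-- Main lemma for termination congruence: by strong induction on the cost of the
left-hand side and structural induction on the term. -/
lemma ter_main (C : CoolSpec O ar S) :
    ∀ n : ℕ, ∀ {V : Type} (t : OTm O ar V) (σ σ' : V → Tm O ar),
      (∀ v s m sf, m ≤ n → cstL C (σ v) s = some (m, sf) → terL C (σ' v) s = some sf) →
      ∀ s sf, cstL C (t.subst σ) s = some (n, sf) →
        terL C (t.subst σ') s = some sf := by
  intro n
  induction n using Nat.strong_induction_on with
  | _ n IH =>
    intro V t
    induction t with
    | var v => intro σ σ' hσ s sf h; exact hσ v s n sf le_rfl h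
    | op f bs iht =>
      intro σ σ' hσ s sf hL
      have hcomp : ∀ (i : Fin (ar f)) s m sf, m ≤ n →
          cstL C ((bs i).subst σ) s = some (m, sf) →
          terL C ((bs i).subst σ') s = some sf := by
        intro i s m sf hm
        rcases Nat.lt_or_ge m n with h | h
        · exact IH m h (bs i) σ σ' (fun v s k sf hk => hσ v s k sf (by omega)) s sf
        · have hmn : m = n := le_antisymm hm h
          subst hmn
          exact iht i σ σ' hσ s sf
      rw [cstL_eq_some_iff] at hL
      rw [terL_eq_some_iff]
      revert hL
      show trcL C (.op f fun i => (bs i).subst σ) s n = some (.inr sf) →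
        ∃ m, cstL C (.op f fun i => (bs i).subst σ') s = some (m, sf)
      set as := fun i => (bs i).subst σ with has
      set as' := fun i => (bs i).subst σ' with has'
      intro hL
      rcases hmode : C.mode f with o | ⟨j, o⟩
      · -- passive operator
        rcases ho : o s with ⟨t', s'⟩ | s'
        · rcases n with _ | m
          · rw [trc_passive_inl_zero hmode as ho] at hL
            exact absurd hL (by simp)
          · rw [trc_passive_inl_succ hmode as ho] at hL
            have hter := IH m (Nat.lt_succ_self m) t' as as'
              (fun i s k sfk hk => hcomp i s k sfk (by omega)) s' sf
              (cstL_eq_some_iff.2 hL)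
            obtain ⟨m₂, hm₂⟩ := terL_eq_some_iff.1 hter
            exact ⟨m₂ + 1, cstL_eq_some_iff.2 (by
              rw [trc_passive_inl_succ hmode as' ho]
              exact cstL_eq_some_iff.1 hm₂)⟩
        · rw [trc_passive_inr hmode as ho] at hL
          rcases n with _ | m
          · refine ⟨0, cstL_eq_some_iff.2 ?_⟩
            rw [trc_passive_inr hmode as' ho]
            exact hL
          · exact absurd hL (by simp)
      · -- active operator
        rcases run_dichotomy C (as j) s (n+1) with ⟨q, s₁, hq⟩ | ⟨k, s', q, s₁, hk, hq, hs⟩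
        · have e1 : trcL C (.op f as) s n = some (.inl s₁) :=
            trc_of_run_inl (run_act hmode as hq)
          rw [hL] at e1
          exact absurd e1 (by simp)
        · have hk' : k ≤ n := Nat.lt_succ_iff.mp hk
          have htk : cstL C (as j) s = some (k, s') :=
            cstL_eq_some_iff.2 (trc_of_run_inr (run_term_succ hq hs))
          have htk0 : terL C (as' j) s = some s' := hcomp j s k s' hk' htk
          obtain ⟨k₂, htk'⟩ := terL_eq_some_iff.1 htk0
          rw [cstL_eq_some_iff, trcL_eq_ent, entE_eq_inr] at htk'
          obtain ⟨q', s₁', hq', hs'⟩ := run_term_elim htk'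
          rcases ho : o s' with ⟨t', s''⟩ | s''
          · -- continuation rule
            have r1 := run_act_term_inl hmode as hq hs ho
            have r2 := run_act_term_inl hmode as' hq' hs' ho
            have hkn : k < n := by
              rcases Nat.lt_trichotomy n k with h | h | h
              · have := run_none_of_term (by rw [trcL_eq_ent, entE_eq_inr] at hL; exact hL)
                  (show n + 1 < k + 1 by omega)
                rw [this] at r1
                exact absurd r1 (by simp)
              · subst h
                have := trc_of_run_inl r1
                rw [hL] at this
                exact absurd this (by simp)
              · exact h
            obtain ⟨m, rfl⟩ : ∃ m, n = k + 1 + m := ⟨n - (k+1), by omega⟩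
            have e1 : trcL C (.op f as) s (k+1+m)
                = trcL C (t'.subst fun i => as i.1) s'' m :=
              trcL_congr_run
                (by rw [show k+1+m+1 = (k+1) + (m+1) from by omega, run_shift r1])
            rw [e1] at hL
            have hter := IH m (by omega) t' _ _
              (fun i s kk sfk hkk => hcomp i.1 s kk sfk (by omega)) s'' sf
              (cstL_eq_some_iff.2 hL)
            obtain ⟨m₂, hm₂⟩ := terL_eq_some_iff.1 hter
            refine ⟨k₂ + 1 + m₂, cstL_eq_some_iff.2 ?_⟩
            have e2 : trcL C (.op f as') s (k₂+1+m₂)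
                = trcL C (t'.subst fun i => as' i.1) s'' m₂ :=
              trcL_congr_run
                (by rw [show k₂+1+m₂+1 = (k₂+1) + (m₂+1) from by omega, run_shift r2])
            rw [e2]
            exact cstL_eq_some_iff.1 hm₂
          · -- terminating rule
            have r1 := run_act_term_inr hmode as hq hs ho
            have r2 := run_act_term_inr hmode as' hq' hs' ho
            obtain ⟨hnk, hsf⟩ := trc_inr_unique hL (trc_of_run_inr r1)
            refine ⟨k₂, cstL_eq_some_iff.2 ?_⟩
            rw [hsf]
            exact trc_of_run_inr r2

/-- for every cool stateful SOS specification `L`, every `n`-ary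
operator `f ∈ Θ` and closed terms `p₁,…,pₙ`, `p'₁,…,p'ₙ`, if `pᵢ` and `p'ᵢ` are
trace (resp. cost, termination) equivalent for all `i`, then `f(p₁,…,pₙ)` and
`f(p'₁,…,p'ₙ)` are trace (resp. cost, termination) equivalent. -/
theorem l_congruence (C : CoolSpec O ar S) (f : O)
    (as as' : Fin (ar f) → Tm O ar) :
    ((∀ i, trcL C (as i) = trcL C (as' i)) →
        trcL C (.op f as) = trcL C (.op f as')) ∧
    ((∀ i, cstL C (as i) = cstL C (as' i)) →
        cstL C (.op f as) = cstL C (.op f as')) ∧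
    ((∀ i, terL C (as i) = terL C (as' i)) →
        terL C (.op f as) = terL C (.op f as')) := by
  refine ⟨?_, ?_, ?_⟩
  · -- trace equivalence
    intro h
    funext s n
    exact trc_main C n (.op f (fun i => .var i)) as as'
      (fun v s m _ => by rw [h v]) s
  · -- cost equivalence
    intro h
    funext s
    rcases hc : cstL C (.op f as) s with _ | ⟨n, sf⟩
    · rcases hc' : cstL C (.op f as') s with _ | ⟨n, sf⟩
      · rfl
      · have h2 := cst_main C n (.op f (fun i => .var i)) as' as
          (fun v s m sf _ => by rw [h v]) s sf hc'
        have h3 : cstL C (.op f as) s = some (n, sf) := h2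
        rw [h3] at hc
        exact absurd hc (by simp)
    · have h2 := cst_main C n (.op f (fun i => .var i)) as as'
        (fun v s m sf _ => by rw [h v]) s sf hc
      have h3 : cstL C (.op f as') s = some (n, sf) := h2
      rw [h3]
  · -- termination equivalence
    intro h
    have hcs : ∀ v s k sfv, cstL C (as v) s = some (k, sfv) →
        terL C (as' v) s = some sfv := by
      intro v s k sfv hk
      rw [← h v]
      exact terL_eq_some_iff.2 ⟨k, hk⟩
    have hcs' : ∀ v s k sfv, cstL C (as' v) s = some (k, sfv) →
        terL C (as v) s = some sfv := by
      intro v s k sfv hk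
      rw [h v]
      exact terL_eq_some_iff.2 ⟨k, hk⟩
    funext s
    rcases ht : terL C (.op f as) s with _ | sf
    · rcases ht' : terL C (.op f as') s with _ | sf
      · rfl
      · obtain ⟨n, hn⟩ := terL_eq_some_iff.1 ht'
        have h2 := ter_main C n (.op f (fun i => .var i)) as' as
          (fun v s m sf _ => hcs' v s m sf) s sf hn
        have h3 : terL C (.op f as) s = some sf := h2
        rw [h3] at ht
        exact absurd ht (by simp)
    · obtain ⟨n, hn⟩ := terL_eq_some_iff.1 ht
      have h2 := ter_main C n (.op f (fun i => .var i)) as as'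
        (fun v s m sf _ => hcs v s m sf) s sf hn
      have h3 : terL C (.op f as') s = some sf := h2
      exact h3.symm

end SOS
end
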